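/- Let M be an s×n integer matrix whose columns span ℝˢ. Suppose M is 1-prime, i.e., for every subset Y of the columns of M with #Y = s+1 that spans ℝˢ, gcd{|det X| : X ⊆ Y, #X = s, X spans ℝˢ} = 1. Then for every θ ∈ A(M) with θ ≠ e = (1,…,1), the set M_θ consists of exactly s columns of M (so M_θ is an invertible s×s submatrix of M). -/
import Mathlib

/-- `θ^y := θ₁^{y₁} ⋯ θ_s^{y_s}` for `θ ∈ ℂˢ` and `y ∈ ℤˢ`. -/
noncomputable def charP (s : ℕ) (θ : Fin s → ℂ) (y : Fin s → ℤ) : ℂ := ∏ i, θ i ^ y i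

/-- The `j`-th column of `M`, as a vector of `ℝˢ`. -/
def col (s n : ℕ) (M : Matrix (Fin s) (Fin n) ℤ) (j : Fin n) : Fin s → ℝ :=
  fun i => (M i j : ℝ)

/-- `A(M)`: the set of `θ ∈ (ℂ∖{0})ˢ` such that the columns `m` of `M` with `θ^m = 1`
span `ℝˢ`. -/
def Aset (s n : ℕ) (M : Matrix (Fin s) (Fin n) ℤ) : Set (Fin s → ℂ) :=
  {θ | (∀ i, θ i ≠ 0) ∧
    Submodule.span ℝ (col s n M '' {j | charP s θ (fun i => M i j) = 1}) = ⊤}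

/-- `M` is 1-prime: for every subset `Y` of the columns of `M` with `#Y = s+1` spanning
`ℝˢ`, the gcd of `|det X|` over the nonsingular `s×s` column submatrices `X` of `Y`
is `1`.  (Selections of `s` columns from `Y` are given by maps `g : Fin s → Fin n` with
range inside `Y`; nonsingularity forces `g` to be injective and `|det|` does not
depend on the ordering.) -/
def IsOnePrime (s n : ℕ) (M : Matrix (Fin s) (Fin n) ℤ) : Prop :=
  ∀ Y : Finset (Fin n), Y.card = s + 1 →
    Submodule.span ℝ (col s n M '' ↑Y) = ⊤ →
    Finset.gcd (Finset.univ.filter fun g : Fin s → Fin n =>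
        (∀ i, g i ∈ Y) ∧ (M.submatrix id g).det ≠ 0)
      (fun g => (M.submatrix id g).det.natAbs) = 1

lemma zpow_finset_sum (a : ℂ) (ha : a ≠ 0) {ι : Type*} (t : Finset ι) (f : ι → ℤ) :
    a ^ (∑ j ∈ t, f j) = ∏ j ∈ t, a ^ f j := by
  induction t using Finset.cons_induction with
  | empty => simp
  | cons j t hj ih => rw [Finset.sum_cons, Finset.prod_cons, zpow_add₀ ha, ih]

/-- If all columns of an integer square matrix `X` satisfy `θ^m = 1`, then so does
`X.mulVec c` for any integer vector `c`. -/
lemma charP_mulVec (s : ℕ) (θ : Fin s → ℂ) (hθ : ∀ i, θ i ≠ 0)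
    (X : Matrix (Fin s) (Fin s) ℤ) (hcol : ∀ j, charP s θ (fun i => X i j) = 1)
    (c : Fin s → ℤ) : charP s θ (X.mulVec c) = 1 := by
  unfold charP at *
  calc ∏ r, θ r ^ (X.mulVec c) r
      = ∏ r, ∏ j, (θ r ^ X r j) ^ c j := by
        refine Finset.prod_congr rfl fun r _ => ?_
        have : (X.mulVec c) r = ∑ j, X r j * c j := by
          simp [Matrix.mulVec, dotProduct]
        rw [this, zpow_finset_sum _ (hθ r)]
        exact Finset.prod_congr rfl fun j _ => zpow_mul _ _ _
    _ = ∏ j, (∏ r, θ r ^ X r j) ^ c j := by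
        rw [Finset.prod_comm]
        exact Finset.prod_congr rfl fun j _ => (Finset.prod_zpow _ _ _)
    _ = 1 := by
        refine Finset.prod_eq_one fun j _ => ?_
        rw [hcol j, one_zpow]

/-- Cramer's rule consequence: `θ_i ^ det X = 1` whenever all columns of `X`
satisfy `θ^m = 1`. -/
lemma theta_pow_det (s : ℕ) (θ : Fin s → ℂ) (hθ : ∀ i, θ i ≠ 0)
    (X : Matrix (Fin s) (Fin s) ℤ) (hcol : ∀ j, charP s θ (fun i => X i j) = 1)
    (i : Fin s) : θ i ^ X.det = 1 := by
  have key := charP_mulVec s θ hθ X hcol (fun k => X.adjugate k i)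
  have hmul : X.mulVec (fun k => X.adjugate k i) = fun r => if r = i then X.det else 0 := by
    funext r
    have : (X.mulVec (fun k => X.adjugate k i)) r = (X * X.adjugate) r i := by
      simp [Matrix.mulVec, dotProduct, Matrix.mul_apply]
    rw [this, Matrix.mul_adjugate]
    simp [Matrix.one_apply]
  rw [hmul] at key
  unfold charP at key
  calc θ i ^ X.det = ∏ r, θ r ^ (if r = i then X.det else (0:ℤ)) := by
        rw [Finset.prod_congr rfl (fun r _ => ?_)]
        · rw [Finset.prod_ite_eq' Finset.univ i (fun r => θ r ^ X.det)]
          simp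
        · rw [apply_ite (θ r ^ · : ℤ → ℂ), zpow_zero]
    _ = 1 := key

/-- If the columns of `M` span `ℝˢ` and `M` is 1-prime, then for every
`θ ∈ A(M)` with `θ ≠ e = (1,…,1)`, the set `M_θ` consists of exactly `s` columns
of `M`. -/
theorem one_prime_Mtheta_card (s n : ℕ) (M : Matrix (Fin s) (Fin n) ℤ)
    (hspan : Submodule.span ℝ (Set.range (col s n M)) = ⊤)
    (hprime : IsOnePrime s n M) :
    ∀ θ ∈ Aset s n M, θ ≠ (fun _ => 1) →
      {j : Fin n | charP s θ (fun i => M i j) = 1}.ncard = s := by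
  classical
  intro θ hθ hne
  obtain ⟨hθ0, hspanθ⟩ := hθ
  set S : Set (Fin n) := {j : Fin n | charP s θ (fun i => M i j) = 1} with hS
  set F : Finset (Fin n) := S.toFinset with hF
  have hFS : (F : Set (Fin n)) = S := by simp [hF]
  have hncard : S.ncard = F.card := by
    rw [← hFS]; simp
  rw [hncard]
  have hspanF : Submodule.span ℝ (col s n M '' (F : Set (Fin n))) = ⊤ := by
    rw [hFS]; exact hspanθ
  -- lower bound
  have hfin : Module.finrank ℝ (Fin s → ℝ) = s := Module.finrank_fin_fun ℝ
  have hlow : s ≤ F.card := by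
    have himg : col s n M '' (F : Set (Fin n)) = ((F.image (col s n M) : Finset (Fin s → ℝ)) : Set (Fin s → ℝ)) := by
      simp [Finset.coe_image]
    have h1 : Module.finrank ℝ (Fin s → ℝ) ≤ (F.image (col s n M)).card := by
      rw [← finrank_top ℝ (Fin s → ℝ), ← hspanF, himg]
      exact finrank_span_finset_le_card _
    calc s = Module.finrank ℝ (Fin s → ℝ) := hfin.symm
      _ ≤ (F.image (col s n M)).card := h1
      _ ≤ F.card := Finset.card_image_le
  -- upper bound: suppose F.card ≥ s + 1, derive θ = e
  have hupp : F.card ≤ s := by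
    by_contra hgt
    push_neg at hgt
    -- find linear independent spanning subset b of col '' F
    obtain ⟨b, hbsub, hbspan, hbli⟩ := exists_linearIndependent ℝ (col s n M '' (F : Set (Fin n)))
    rw [hspanF] at hbspan
    have hbfin : b.Finite := ((F : Set (Fin n)).toFinite.image _).subset hbsub
    have : Fintype b := hbfin.fintype
    have hbcard : b.toFinset.card = s := by
      have := finrank_span_set_eq_card hbli
      rw [hbspan, finrank_top, hfin] at this
      omega
    -- choose a preimage in F for each element of b
    have hchoice : ∀ x : b, ∃ j : Fin n, j ∈ F ∧ col s n M j = (x : Fin s → ℝ) := by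
      intro x
      obtain ⟨j, hj, hcj⟩ := hbsub x.2
      exact ⟨j, hj, hcj⟩
    choose f hfF hfcol using hchoice
    have hfinj : Function.Injective f := by
      intro x y hxy
      have : (x : Fin s → ℝ) = y := by rw [← hfcol x, ← hfcol y, hxy]
      exact Subtype.ext this
    set T : Finset (Fin n) := Finset.univ.image f with hT
    have hTF : T ⊆ F := by
      intro j hj
      simp only [hT, Finset.mem_image] at hj
      obtain ⟨x, _, rfl⟩ := hj
      exact hfF x
    have hTcard : T.card = s := by
      rw [hT, Finset.card_image_of_injective _ hfinj, Finset.card_univ,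
        ← Set.toFinset_card] at *
      omega
    -- pick an extra element
    have hj0 : ∃ j0, j0 ∈ F ∧ j0 ∉ T := by
      by_contra h
      push_neg at h
      have : F ⊆ T := fun j hj => h j hj
      have := Finset.card_le_card this
      omega
    obtain ⟨j0, hj0F, hj0T⟩ := hj0
    set Y : Finset (Fin n) := insert j0 T with hY
    have hYcard : Y.card = s + 1 := by
      rw [hY, Finset.card_insert_of_notMem hj0T, hTcard]
    have hYF : Y ⊆ F := by
      intro j hj
      rcases Finset.mem_insert.mp hj with rfl | hj
      · exact hj0F
      · exact hTF hj
    have hYspan : Submodule.span ℝ (col s n M '' (Y : Set (Fin n))) = ⊤ := by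
      rw [eq_top_iff, ← hbspan]
      apply Submodule.span_mono
      intro x hx
      obtain ⟨j, hjT, hjcol⟩ : ∃ j ∈ T, col s n M j = x := by
        refine ⟨f ⟨x, hx⟩, ?_, hfcol _⟩
        simp [hT]
      exact ⟨j, Finset.mem_insert_of_mem hjT, hjcol⟩
    have hgcd := hprime Y hYcard hYspan
    -- θ = e, contradiction
    apply hne
    funext i
    have hdvd : orderOf (θ i) ∣ Finset.gcd (Finset.univ.filter fun g : Fin s → Fin n =>
        (∀ k, g k ∈ Y) ∧ (M.submatrix id g).det ≠ 0)
      (fun g => (M.submatrix id g).det.natAbs) := by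
      refine Finset.dvd_gcd fun g hg => ?_
      simp only [Finset.mem_filter] at hg
      obtain ⟨-, hgY, hgdet⟩ := hg
      have hcol : ∀ j, charP s θ (fun r => (M.submatrix id g) r j) = 1 := by
        intro j
        have : g j ∈ S := by rw [← hFS]; exact_mod_cast hYF (hgY j)
        exact this
      have hpow := theta_pow_det s θ hθ0 (M.submatrix id g) hcol i
      have hnat : θ i ^ (M.submatrix id g).det.natAbs = 1 := by
        rcases Int.natAbs_eq (M.submatrix id g).det with h | h
        · rw [← zpow_natCast, ← h, hpow]
        · have h2 : ((M.submatrix id g).det.natAbs : ℤ) = -(M.submatrix id g).det := by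
            linarith
          rw [← zpow_natCast, h2, zpow_neg, hpow, inv_one]
      exact orderOf_dvd_of_pow_eq_one hnat
    rw [hgcd, Nat.dvd_one] at hdvd
    exact orderOf_eq_one_iff.mp hdvd
  omega
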